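/- In the binary tree T_n with edge resistances r_e = 2^{d(e)-1}X_e, X_e ∈ [a,b], if the weight of a single edge e is replaced by another value X'_e ∈ [a,b] yielding resistance Rₙ^{(e)}, then (Rₙ - Rₙ^{(e)})₊ ≤ (b-a)·2^{d(e)-1}·Θ^{*,e}(e)² and (Rₙ - Rₙ^{(e)})₋ ≤ (b-a)·2^{d(e)-1}·Θ*(e)², where Θ* and Θ^{*,e} are the optimal unit flows for the original and modified networks respectively. -/

import Mathlib

/-- Effective resistance of the edge-rooted binary tree `T_n` (`treeRes (n-1)`
corresponds to `T_n`), via the series-parallel recursion. -/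
noncomputable def treeRes : ℕ → (List Bool → ℝ) → ℝ
  | 0, w => w []
  | n + 1, w =>
      w [] +
        (2 * treeRes n (fun l => w (true :: l))) * (2 * treeRes n (fun l => w (false :: l))) /
          (2 * treeRes n (fun l => w (true :: l)) + 2 * treeRes n (fun l => w (false :: l)))

/-- The optimal (current) unit flow of the tree, splitting at each node proportionally
to the subtree conductances; it attains the infimum in Thomson's principle. -/
noncomputable def treeFlow : ℕ → (List Bool → ℝ) → List Bool → ℝ
  | _, _, [] => 1
  | 0, _, _ :: _ => 0
  | n + 1, w, x :: l =>
      (treeRes n (fun m => w ((!x) :: m)) /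
          (treeRes n (fun m => w (true :: m)) + treeRes n (fun m => w (false :: m)))) *
        treeFlow n (fun m => w (x :: m)) l

/-!
Induct along the path from the root to `e`. At each node the network is the root edge in
series with the two doubled subtrees in parallel, and only the subtree containing `e` changes.
For two resistors in parallel, plugging the optimal current of the modified network into the
Thomson functional of the original one gives the one-sided bound
`x y / (x + y) - x' y / (x' + y) ≤ (x - x') (y / (x' + y))²`, `y / (x' + y)` being the
modified current through the first branch; so the bound for the subtree is
transported to the whole tree with a factor `2` (the doubling) and the squared current
fraction, which is exactly how `2 ^ e.length` and `treeFlow` accumulate.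
-/

lemma treeRes_pos {n : ℕ} {w : List Bool → ℝ} (hw : ∀ l, 0 < w l) : 0 < treeRes n w := by
  induction n generalizing w with
  | zero => exact hw []
  | succ n ih =>
    have := ih (w := fun l => w (true :: l)) fun _ => hw _
    have := ih (w := fun l => w (false :: l)) fun _ => hw _
    have := hw []
    rw [treeRes]
    positivity

lemma treeRes_succ (n : ℕ) (w : List Bool → ℝ) (x : Bool) :
    treeRes (n + 1) w = w [] +
      2 * treeRes n (fun l => w (x :: l)) * (2 * treeRes n (fun l => w ((!x) :: l))) /
        (2 * treeRes n (fun l => w (x :: l)) + 2 * treeRes n (fun l => w ((!x) :: l))) := by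
  cases x
  · rw [treeRes, mul_comm (2 * treeRes n _), add_comm (2 * treeRes n _)]
    rfl
  · rfl

lemma treeFlow_succ_cons (n : ℕ) (w : List Bool → ℝ) (x : Bool) (l : List Bool) :
    treeFlow (n + 1) w (x :: l) =
      treeRes n (fun m => w ((!x) :: m)) /
          (treeRes n (fun m => w (x :: m)) + treeRes n (fun m => w ((!x) :: m))) *
        treeFlow n (fun m => w (x :: m)) l := by
  cases x
  · rw [treeFlow, add_comm (treeRes n _)]
    rfl
  · rfl

lemma mul_div_add_sub_le {x x' y : ℝ} (hx : 0 < x) (hx' : 0 < x') (hy : 0 < y) :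
    x * y / (x + y) - x' * y / (x' + y) ≤ (x - x') * (y / (x' + y)) ^ 2 := by
  have hgap : (x - x') * (y / (x' + y)) ^ 2 - (x * y / (x + y) - x' * y / (x' + y)) =
      (x - x') ^ 2 * y ^ 2 / ((x' + y) ^ 2 * (x + y)) := by
    field_simp
    ring
  have : 0 ≤ (x - x') ^ 2 * y ^ 2 / ((x' + y) ^ 2 * (x + y)) := by positivity
  linarith

lemma treeRes_sub_le {n : ℕ} {e : List Bool} {w w' : List Bool → ℝ} (he : e.length ≤ n)
    (hw : ∀ l, 0 < w l) (hw' : ∀ l, 0 < w' l) (hagree : ∀ l, l ≠ e → w l = w' l) :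
    treeRes n w - treeRes n w' ≤ (w e - w' e) * 2 ^ e.length * treeFlow n w' e ^ 2 := by
  induction n generalizing e w w' with
  | zero =>
    obtain rfl : e = [] := List.eq_nil_of_length_eq_zero (Nat.le_zero.1 he)
    simp [treeRes, treeFlow]
  | succ n ih =>
    cases e with
    | nil =>
      have hsub : ∀ x : Bool, (fun l => w (x :: l)) = fun l => w' (x :: l) :=
        fun x => funext fun l => hagree _ (List.cons_ne_nil x l)
      simp [treeRes, treeFlow, hsub]
    | cons x l =>
      have hroot : w [] = w' [] := hagree [] (List.cons_ne_nil x l).symm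
      have hsibling : (fun m => w ((!x) :: m)) = fun m => w' ((!x) :: m) :=
        funext fun m => hagree _ (by simp)
      have hIH := ih (e := l) (w := fun m => w (x :: m)) (w' := fun m => w' (x :: m))
        (Nat.le_of_succ_le_succ he) (fun _ => hw _) (fun _ => hw' _)
        (fun m hm => hagree _ (by simpa using hm))
      rw [treeRes_succ n w x, treeRes_succ n w' x, hsibling, hroot, treeFlow_succ_cons,
        List.length_cons, pow_succ]
      set A := treeRes n fun m => w (x :: m)
      set A' := treeRes n fun m => w' (x :: m)
      set B := treeRes n fun m => w' ((!x) :: m)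
      have hA : 0 < A := treeRes_pos fun _ => hw _
      have hA' : 0 < A' := treeRes_pos fun _ => hw' _
      have hB : 0 < B := treeRes_pos fun _ => hw' _
      have hpar := mul_div_add_sub_le (mul_pos two_pos hA) (mul_pos two_pos hA')
        (mul_pos two_pos hB)
      have hcurrent : 2 * B / (2 * A' + 2 * B) = B / (A' + B) := by
        rw [← mul_add, mul_div_mul_left _ _ two_ne_zero]
      rw [hcurrent] at hpar
      calc _ = 2 * A * (2 * B) / (2 * A + 2 * B) - 2 * A' * (2 * B) / (2 * A' + 2 * B) := by
            ring
        _ ≤ 2 * (A - A') * (B / (A' + B)) ^ 2 := by linarith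
        _ ≤ 2 * ((w (x :: l) - w' (x :: l)) * 2 ^ l.length *
              treeFlow n (fun m => w' (x :: m)) l ^ 2) * (B / (A' + B)) ^ 2 := by gcongr
        _ = _ := by ring

theorem stmt_16_general (a b : ℝ) (ha : 0 < a) (n : ℕ)
    (e : List Bool) (he : e.length ≤ n - 1) (w w' : List Bool → ℝ)
    (hw : ∀ l, a ≤ w l ∧ w l ≤ b) (hw' : ∀ l, a ≤ w' l ∧ w' l ≤ b)
    (hagree : ∀ l, l ≠ e → w l = w' l) :
    max (treeRes (n - 1) w - treeRes (n - 1) w') 0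
        ≤ (b - a) * 2 ^ e.length * (treeFlow (n - 1) w' e) ^ 2 ∧
      max (treeRes (n - 1) w' - treeRes (n - 1) w) 0
        ≤ (b - a) * 2 ^ e.length * (treeFlow (n - 1) w e) ^ 2 := by
  have hpos : ∀ l, 0 < w l := fun l => ha.trans_le (hw l).1
  have hpos' : ∀ l, 0 < w' l := fun l => ha.trans_le (hw' l).1
  have hba : 0 ≤ b - a := by linarith [hw e]
  constructor
  · refine max_le ((treeRes_sub_le he hpos hpos' hagree).trans ?_) (by positivity)
    gcongr ?_ * _ * _
    linarith [hw e, hw' e]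
  · refine max_le ((treeRes_sub_le he hpos' hpos fun l hl => (hagree l hl).symm).trans ?_)
      (by positivity)
    gcongr ?_ * _ * _
    linarith [hw e, hw' e]

/-- If the weight of the single edge `e` (at depth `d(e) = e.length + 1`, so with
resistance `2^(d(e)-1) X_e`) is changed, the positive and negative parts of the change
in effective resistance are bounded via the optimal flows of the two networks. -/
theorem stmt_16 (a b : ℝ) (ha : 0 < a) (hab : a < b) (n : ℕ) (hn : 1 ≤ n)
    (e : List Bool) (he : e.length ≤ n - 1) (w w' : List Bool → ℝ)
    (hw : ∀ l, a ≤ w l ∧ w l ≤ b) (hw' : ∀ l, a ≤ w' l ∧ w' l ≤ b)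
    (hagree : ∀ l, l ≠ e → w l = w' l) :
    max (treeRes (n - 1) w - treeRes (n - 1) w') 0
        ≤ (b - a) * 2 ^ e.length * (treeFlow (n - 1) w' e) ^ 2 ∧
      max (treeRes (n - 1) w' - treeRes (n - 1) w) 0
        ≤ (b - a) * 2 ^ e.length * (treeFlow (n - 1) w e) ^ 2 :=
  stmt_16_general a b ha n e he w w' hw hw' hagree
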